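/- arXiv:2506.23540 — 2 statements merged into one kernel-verified Lean document; each statement's English description precedes it below -/
import Mathlib

section
/- Let g : 𝔻 → ℂ be a holomorphic function on the open unit disc with power series g(u) = ∑_{m≥0} c_m u^m and |g(u)| ≤ 1 for all u ∈ 𝔻. Then for every m ≥ 1, |c_m| ≤ 1 − |c₀|². -/
/-!
Averaging `g` over the rotations `u ↦ ωʲ u` by the `m`-th roots of unity keeps exactly the
coefficients `c (m k)`, so `F (u ^ m) = m⁻¹ ∑ⱼ g (ωʲ u)` defines a power series
`F v = ∑ₖ c (m k) vᵏ` bounded by `1` on the disc, with `F 0 = c 0` and `F' 0 = c m`. This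
reduces the claim to `m = 1`, the Schwarz–Pick inequality `‖F' 0‖ ≤ 1 - ‖F 0‖²`: composing `F`
with the disc automorphism `w ↦ (w - a) / (1 - ā w)`, `a = F 0`, gives a map fixing `0`, to which
the Schwarz lemma applies. When `‖F 0‖ = 1` the maximum modulus principle makes `F` constant.
-/

open Metric Set Topology Finset ComplexConjugate NNReal

theorem hasFPowerSeriesOnBall_ofScalars_of_hasSum {F : ℂ → ℂ} {d : ℕ → ℂ} {R : ℝ≥0}
    (hR : 0 < R) (hF : ∀ u ∈ ball (0 : ℂ) R, HasSum (fun k ↦ d k * u ^ k) (F u)) :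
    HasFPowerSeriesOnBall F (FormalMultilinearSeries.ofScalars ℂ d) 0 R := by
  refine ⟨ENNReal.le_of_forall_nnreal_lt fun r hr ↦ ?_, by exact_mod_cast hR, fun {u} hu ↦ ?_⟩
  · have hr : ((r : ℝ) : ℂ) ∈ ball (0 : ℂ) R := by simpa using hr
    refine FormalMultilinearSeries.le_radius_of_tendsto _ (l := 0) ?_
    simpa [FormalMultilinearSeries.ofScalars_norm] using (hF _ hr).summable.tendsto_atTop_zero.norm
  · have hterms : (fun k ↦ FormalMultilinearSeries.ofScalars ℂ d k fun _ ↦ u) =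
        fun k ↦ d k * u ^ k := by
      ext k
      simp [mul_comm]
    rw [zero_add, hterms]
    exact hF u (by simpa using hu)

noncomputable def discMobius (a w : ℂ) : ℂ := (w - a) / (1 - conj a * w)

theorem discMobius_self (a : ℂ) : discMobius a a = 0 := by simp [discMobius]

theorem norm_one_sub_conj_mul_sq_sub_norm_sub_sq (a w : ℂ) :
    ‖1 - conj a * w‖ ^ 2 - ‖w - a‖ ^ 2 = (1 - ‖a‖ ^ 2) * (1 - ‖w‖ ^ 2) := by
  simp only [Complex.sq_norm, Complex.normSq_apply, Complex.sub_re, Complex.sub_im,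
    Complex.mul_re, Complex.mul_im, Complex.conj_re, Complex.conj_im, Complex.one_re,
    Complex.one_im]
  ring

theorem one_sub_conj_mul_ne_zero {a w : ℂ} (ha : ‖a‖ < 1) (hw : ‖w‖ ≤ 1) :
    1 - conj a * w ≠ 0 := by
  rw [sub_ne_zero]
  refine fun h ↦ (norm_one (α := ℂ)).not_lt ?_
  rw [h, norm_mul, Complex.norm_conj]
  nlinarith [norm_nonneg a, norm_nonneg w]

theorem norm_discMobius_le_one {a w : ℂ} (ha : ‖a‖ < 1) (hw : ‖w‖ ≤ 1) :
    ‖discMobius a w‖ ≤ 1 := by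
  have hden := norm_pos_iff.mpr (one_sub_conj_mul_ne_zero ha hw)
  have key := norm_one_sub_conj_mul_sq_sub_norm_sub_sq a w
  rw [discMobius, norm_div, div_le_one hden]
  refine (pow_le_pow_iff_left₀ (norm_nonneg _) (norm_nonneg _) two_ne_zero).mp ?_
  have : 0 ≤ (1 - ‖a‖ ^ 2) * (1 - ‖w‖ ^ 2) := by
    apply mul_nonneg <;> nlinarith [norm_nonneg a, norm_nonneg w]
  linarith

theorem hasDerivAt_discMobius {a : ℂ} (ha : ‖a‖ < 1) :
    HasDerivAt (discMobius a) (((1 - ‖a‖ ^ 2 : ℝ) : ℂ)⁻¹) a := by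
  have hden : 1 - conj a * a = ((1 - ‖a‖ ^ 2 : ℝ) : ℂ) := by
    rw [Complex.conj_mul']; push_cast; ring
  refine (((hasDerivAt_id a).sub_const a).div (((hasDerivAt_id a).const_mul (conj a)).const_sub 1)
    (one_sub_conj_mul_ne_zero ha ha.le)).congr_deriv ?_
  have : ((1 - ‖a‖ ^ 2 : ℝ) : ℂ) ≠ 0 := hden ▸ one_sub_conj_mul_ne_zero ha ha.le
  simp only [id, sub_self, zero_mul, sub_zero, one_mul, hden]
  field_simp

theorem differentiableAt_discMobius {a w : ℂ} (ha : ‖a‖ < 1) (hw : ‖w‖ ≤ 1) :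
    DifferentiableAt ℂ (discMobius a) w :=
  (differentiableAt_id.sub_const a).div ((differentiableAt_id.const_mul _).const_sub 1)
    (one_sub_conj_mul_ne_zero ha hw)

theorem norm_deriv_le_one_sub_sq_div_of_mapsTo_ball {f : ℂ → ℂ} {c : ℂ} {R : ℝ}
    (hd : DifferentiableOn ℂ f (ball c R)) (hf : MapsTo f (ball c R) (closedBall 0 1))
    (hR : 0 < R) : ‖deriv f c‖ ≤ (1 - ‖f c‖ ^ 2) / R := by
  have hnorm : ∀ z ∈ ball c R, ‖f z‖ ≤ 1 := fun z hz ↦ by simpa using hf hz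
  rcases (hnorm c (mem_ball_self hR)).lt_or_eq with ha | ha
  · have hdiff : DifferentiableOn ℂ (discMobius (f c) ∘ f) (ball c R) := fun z hz ↦
      ((differentiableAt_discMobius ha (hnorm z hz)).comp z
        (hd.differentiableAt (isOpen_ball.mem_nhds hz))).differentiableWithinAt
    have hmaps : MapsTo (discMobius (f c) ∘ f) (ball c R)
        (closedBall ((discMobius (f c) ∘ f) c) 1) := fun z hz ↦ by
      simpa [discMobius_self] using norm_discMobius_le_one ha (hnorm z hz)
    have hderiv : deriv (discMobius (f c) ∘ f) c =
        ((1 - ‖f c‖ ^ 2 : ℝ) : ℂ)⁻¹ * deriv f c :=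
      ((hasDerivAt_discMobius ha).comp c
        (hd.differentiableAt (ball_mem_nhds c hR)).hasDerivAt).deriv
    have hpos : 0 < 1 - ‖f c‖ ^ 2 := by nlinarith [norm_nonneg (f c)]
    have := Complex.norm_deriv_le_div_of_mapsTo_ball hdiff hmaps hR
    rw [hderiv, norm_mul, norm_inv, Complex.norm_real, Real.norm_of_nonneg hpos.le,
      inv_mul_le_iff₀ hpos] at this
    rwa [mul_one_div] at this
  · have hmax : IsLocalMax (norm ∘ f) c := by
      filter_upwards [ball_mem_nhds c hR] with z hz
      simpa [ha] using hnorm z hz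
    have hconst : f =ᶠ[𝓝 c] fun _ ↦ f c := Complex.eventually_eq_of_isLocalMax_norm
      (hd.eventually_differentiableAt (ball_mem_nhds c hR)) hmax
    simp [hconst.deriv_eq, ha]

theorem norm_coeff_one_le_one_sub_sq {F : ℂ → ℂ} {d : ℕ → ℂ}
    (hF : ∀ u ∈ ball (0 : ℂ) 1, HasSum (fun k ↦ d k * u ^ k) (F u))
    (hFb : ∀ u ∈ ball (0 : ℂ) 1, ‖F u‖ ≤ 1) : ‖d 1‖ ≤ 1 - ‖d 0‖ ^ 2 := by
  have hps := hasFPowerSeriesOnBall_ofScalars_of_hasSum (R := 1) one_pos (by simpa using hF)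
  have hF0 : F 0 = d 0 := by simpa using (hps.coeff_zero ![]).symm
  have hF1 : deriv F 0 = d 1 := by simpa using hps.hasFPowerSeriesAt.deriv
  have hd : DifferentiableOn ℂ F (ball 0 1) := by
    simpa only [eball_coe, NNReal.coe_one] using hps.differentiableOn
  simpa [hF0, hF1] using
    norm_deriv_le_one_sub_sq_div_of_mapsTo_ball hd (fun u hu ↦ by simpa using hFb u hu) one_pos

theorem IsPrimitiveRoot.geom_sum_pow_eq_ite {K : Type*} [Field K] {ω : K} {m : ℕ}
    (hω : IsPrimitiveRoot ω m) (k : ℕ) :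
    ∑ j ∈ range m, (ω ^ k) ^ j = if m ∣ k then (m : K) else 0 := by
  split_ifs with hk
  · obtain ⟨t, rfl⟩ := hk
    simp [pow_mul, hω.pow_eq_one]
  · rw [geom_sum_eq (mt (hω.pow_eq_one_iff_dvd k).mp hk), ← pow_mul, mul_comm, pow_mul,
      hω.pow_eq_one, one_pow, sub_self, zero_div]

theorem IsPrimitiveRoot.hasSum_coeff_mul_pow_pow {K : Type*} [Field K] [CharZero K]
    [TopologicalSpace K] [IsTopologicalRing K] {ω : K} {m : ℕ} (hω : IsPrimitiveRoot ω m)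
    (hm : 0 < m) {c : ℕ → K} {u : K} {s : ℕ → K}
    (hs : ∀ j ∈ range m, HasSum (fun k ↦ c k * (ω ^ j * u) ^ k) (s j)) :
    HasSum (fun k ↦ c (m * k) * (u ^ m) ^ k) ((m : K)⁻¹ * ∑ j ∈ range m, s j) := by
  have hfilter : ∀ k, ∑ j ∈ range m, c k * (ω ^ j * u) ^ k =
      if m ∣ k then m * (c k * u ^ k) else 0 := fun k ↦ by
    simp_rw [mul_pow, ← pow_mul, mul_comm _ k, pow_mul]
    rw [← mul_sum, ← sum_mul, hω.geom_sum_pow_eq_ite]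
    split_ifs <;> ring
  have hsum := (hasSum_sum hs).mul_left (m : K)⁻¹
  simp_rw [hfilter] at hsum
  have hinj : Function.Injective (m * ·) := mul_right_injective₀ hm.ne'
  rw [← hinj.hasSum_iff] at hsum
  · refine hsum.congr_fun fun k ↦ ?_
    simp [pow_mul, hm.ne']
  · rintro k hk
    rw [if_neg fun ⟨t, ht⟩ ↦ hk ⟨t, ht.symm⟩, mul_zero]

theorem exists_pow_eq_of_mem_ball_one {K : Type*} [NormedField K] [IsAlgClosed K] {m : ℕ}
    (hm : 0 < m) {v : K} (hv : v ∈ ball (0 : K) 1) : ∃ u ∈ ball (0 : K) 1, u ^ m = v := by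
  obtain ⟨u, hu⟩ := IsAlgClosed.exists_pow_nat_eq v hm
  refine ⟨u, ?_, hu⟩
  rw [mem_ball_zero_iff] at hv ⊢
  rwa [← pow_lt_one_iff_of_nonneg (norm_nonneg u) hm.ne', ← norm_pow, hu]

theorem exists_hasSum_coeff_mul_of_norm_le_one {g : ℂ → ℂ} {c : ℕ → ℂ}
    (hg : ∀ u ∈ ball (0 : ℂ) 1, HasSum (fun k ↦ c k * u ^ k) (g u))
    (hb : ∀ u ∈ ball (0 : ℂ) 1, ‖g u‖ ≤ 1) {m : ℕ} (hm : 0 < m) :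
    ∃ F : ℂ → ℂ, (∀ v ∈ ball (0 : ℂ) 1, HasSum (fun k ↦ c (m * k) * v ^ k) (F v)) ∧
      ∀ v ∈ ball (0 : ℂ) 1, ‖F v‖ ≤ 1 := by
  obtain ⟨ω, hω⟩ : ∃ ω : ℂ, IsPrimitiveRoot ω m := ⟨_, Complex.isPrimitiveRoot_exp m hm.ne'⟩
  have key : ∀ v ∈ ball (0 : ℂ) 1, ∃ s, HasSum (fun k ↦ c (m * k) * v ^ k) s ∧ ‖s‖ ≤ 1 := by
    intro v hv
    obtain ⟨u, hu, rfl⟩ := exists_pow_eq_of_mem_ball_one hm hv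
    have hωu : ∀ j, ω ^ j * u ∈ ball (0 : ℂ) 1 := by
      simpa [hω.norm'_eq_one hm.ne'] using hu
    refine ⟨_, hω.hasSum_coeff_mul_pow_pow hm fun j _ ↦ hg _ (hωu j), ?_⟩
    have hsum : ‖∑ j ∈ range m, g (ω ^ j * u)‖ ≤ m :=
      (norm_sum_le_of_le _ fun j _ ↦ hb _ (hωu j)).trans (by simp)
    rw [norm_mul, norm_inv, Complex.norm_natCast]
    exact inv_mul_le_one_of_le₀ hsum (Nat.cast_nonneg m)
  choose! F hF hFb using key
  exact ⟨F, hF, hFb⟩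

/-- Wiener's inequality: if `g(u) = ∑ c_m u^m` is holomorphic on the unit disc with
`|g| ≤ 1`, then `|c_m| ≤ 1 - |c₀|²` for all `m ≥ 1`. -/
theorem stmt_8 (g : ℂ → ℂ) (c : ℕ → ℂ)
    (hg : ∀ u ∈ Metric.ball (0 : ℂ) 1, HasSum (fun m : ℕ => c m * u ^ m) (g u))
    (hb : ∀ u ∈ Metric.ball (0 : ℂ) 1, ‖g u‖ ≤ 1) :
    ∀ m : ℕ, 1 ≤ m → ‖c m‖ ≤ 1 - ‖c 0‖ ^ 2 := by
  intro m hm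
  obtain ⟨F, hF, hFb⟩ := exists_hasSum_coeff_mul_of_norm_le_one hg hb hm
  simpa using norm_coeff_one_le_one_sub_sq hF hFb
end

section
/- Let g : 𝔻 → ℂ be holomorphic with power series g(u) = ∑_{m≥0} c_m u^m, and suppose Re(M − e^{iθ} g(u)) ≥ 0 for all u ∈ 𝔻, where M = sup_{u ∈ 𝔻} |g(u)| and θ ∈ ℝ is chosen so that e^{iθ} c₀ = |c₀|. Then for every m ≥ 1, |c_m| ≤ 2(M − |c₀|). -/
/-!
On the circle `u = r e^{it}` (`0 ≤ r < 1`) the series can be integrated termwise against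
`e^{ikt}`, and orthogonality of the exponentials picks out single coefficients. For `m ≥ 1`
the coefficient of `e^{imt}` vanishes, so adding the conjugate of that integral gives
`2π a_m r^m = ∫ 2 Re h(r e^{it}) e^{-imt} dt`, while `2π Re a_0 = ∫ Re h(r e^{it}) dt`.
As `Re h ≥ 0`, the norm of the first integral is at most the second one, doubled:
`‖a_m‖ r^m ≤ 2 Re a_0`; now let `r → 1`. The theorem is the case `h = M - e^{iθ} g`,
whose constant coefficient is `M - |c_0|`.
-/

open Complex Metric MeasureTheory
open scoped Real Topology ComplexConjugate

theorem integral_exp_int_mul_I (l : ℤ) :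
    ∫ t in (0 : ℝ)..2 * π, exp (l * t * I) = if l = 0 then (2 * π : ℂ) else 0 := by
  split_ifs with hl
  · simp [hl]
  · have hlI : (l : ℂ) * I ≠ 0 := by simp [hl]
    simp_rw [mul_right_comm _ _ I]
    rw [integral_exp_mul_complex hlI, ofReal_zero, mul_zero, Complex.exp_zero,
      show (l : ℂ) * I * ((2 * π : ℝ) : ℂ) = l * (2 * π * I) by push_cast; ring,
      exp_int_mul_two_pi_mul_I, sub_self, zero_div]

theorem norm_ofReal_mul_exp_mul_I {r : ℝ} (hr : 0 ≤ r) (t : ℝ) :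
    ‖(r : ℂ) * exp (t * I)‖ = r := by
  rw [norm_mul, norm_exp_ofReal_mul_I, mul_one, norm_real, Real.norm_of_nonneg hr]

theorem ofReal_mul_exp_mul_I_mem_ball {r : ℝ} (hr0 : 0 ≤ r) (hr1 : r < 1) (t : ℝ) :
    (r : ℂ) * exp (t * I) ∈ ball (0 : ℂ) 1 := by
  rwa [mem_ball_zero_iff, norm_ofReal_mul_exp_mul_I hr0]

section PowerSeriesOnCircle

variable {g : ℂ → ℂ} {c : ℕ → ℂ} {r : ℝ}

theorem summable_norm_mul_pow_of_hasSum
    (hg : ∀ u ∈ ball (0 : ℂ) 1, HasSum (fun n => c n * u ^ n) (g u)) (hr0 : 0 ≤ r) (hr1 : r < 1) :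
    Summable fun n => ‖c n‖ * r ^ n := by
  have hr : (r : ℂ) ∈ ball (0 : ℂ) 1 := by simpa [abs_of_nonneg hr0] using hr1
  simpa [abs_of_nonneg hr0] using summable_norm_iff.mpr (hg r hr).summable

theorem continuous_comp_ofReal_mul_exp_mul_I
    (hg : ∀ u ∈ ball (0 : ℂ) 1, HasSum (fun n => c n * u ^ n) (g u)) (hr0 : 0 ≤ r) (hr1 : r < 1) :
    Continuous fun t : ℝ => g (r * exp (t * I)) := by
  simp_rw [← fun t => (hg _ (ofReal_mul_exp_mul_I_mem_ball hr0 hr1 t)).tsum_eq]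
  refine continuous_tsum (fun n => by fun_prop) (summable_norm_mul_pow_of_hasSum hg hr0 hr1)
    fun n t => ?_
  rw [norm_mul, norm_pow, norm_ofReal_mul_exp_mul_I hr0]

theorem hasSum_integral_comp_mul_exp_mul_I
    (hg : ∀ u ∈ ball (0 : ℂ) 1, HasSum (fun n => c n * u ^ n) (g u)) (hr0 : 0 ≤ r) (hr1 : r < 1)
    (k : ℤ) :
    HasSum (fun n : ℕ => c n * r ^ n * ∫ t in (0 : ℝ)..2 * π, exp (((n + k : ℤ) : ℂ) * t * I))
      (∫ t in (0 : ℝ)..2 * π, g (r * exp (t * I)) * exp (k * t * I)) := by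
  have hterm (n : ℕ) (t : ℝ) : c n * (r * exp (t * I)) ^ n * exp (k * t * I)
      = c n * r ^ n * exp (((n + k : ℤ) : ℂ) * t * I) := by
    rw [mul_pow, ← exp_nat_mul, ← mul_assoc, mul_assoc _ (exp _), ← exp_add]
    push_cast
    ring_nf
  simp_rw [← intervalIntegral.integral_const_mul, ← hterm]
  refine intervalIntegral.hasSum_integral_of_dominated_convergence (fun n _ => ‖c n‖ * r ^ n)
    (fun n => by fun_prop) (fun n => ae_of_all _ fun t _ => ?_)
    (ae_of_all _ fun t _ => summable_norm_mul_pow_of_hasSum hg hr0 hr1)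
    intervalIntegrable_const
    (ae_of_all _ fun t _ => (hg _ (ofReal_mul_exp_mul_I_mem_ball hr0 hr1 t)).mul_right _)
  have hk : ‖exp (k * t * I)‖ = 1 := by exact_mod_cast norm_exp_ofReal_mul_I (k * t)
  rw [norm_mul, norm_mul, norm_pow, norm_ofReal_mul_exp_mul_I hr0, hk, mul_one]

theorem integral_comp_mul_exp_neg_mul_I
    (hg : ∀ u ∈ ball (0 : ℂ) 1, HasSum (fun n => c n * u ^ n) (g u)) (hr0 : 0 ≤ r) (hr1 : r < 1)
    (m : ℕ) :
    ∫ t in (0 : ℝ)..2 * π, g (r * exp (t * I)) * exp (-m * t * I) = 2 * π * c m * r ^ m := by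
  have H := hasSum_integral_comp_mul_exp_mul_I hg hr0 hr1 (-m)
  simp_rw [integral_exp_int_mul_I, add_neg_eq_zero, Nat.cast_inj] at H
  push_cast at H
  rw [H.unique (hasSum_single m fun n hn => by simp [hn]), if_pos rfl]
  ring

theorem integral_comp_mul_exp_mul_I_eq_zero
    (hg : ∀ u ∈ ball (0 : ℂ) 1, HasSum (fun n => c n * u ^ n) (g u)) (hr0 : 0 ≤ r) (hr1 : r < 1)
    {m : ℕ} (hm : m ≠ 0) :
    ∫ t in (0 : ℝ)..2 * π, g (r * exp (t * I)) * exp (m * t * I) = 0 := by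
  have H := hasSum_integral_comp_mul_exp_mul_I hg hr0 hr1 m
  have hnm (n : ℕ) : (n + m : ℤ) ≠ 0 := by omega
  simp only [integral_exp_int_mul_I, hnm, if_false, mul_zero] at H
  exact H.unique hasSum_zero

theorem integral_re_comp_ofReal_mul_exp_mul_I
    (hg : ∀ u ∈ ball (0 : ℂ) 1, HasSum (fun n => c n * u ^ n) (g u)) (hr0 : 0 ≤ r) (hr1 : r < 1) :
    ∫ t in (0 : ℝ)..2 * π, (g (r * exp (t * I))).re = 2 * π * (c 0).re := by
  have h0 := integral_comp_mul_exp_neg_mul_I hg hr0 hr1 0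
  simp only [CharP.cast_eq_zero, neg_zero, zero_mul, Complex.exp_zero, mul_one, pow_zero] at h0
  have hre := intervalIntegral.intervalIntegral_re
    ((continuous_comp_ofReal_mul_exp_mul_I hg hr0 hr1).intervalIntegrable (μ := volume) 0 (2 * π))
  simp only [RCLike.re_to_complex] at hre
  rw [hre, h0]
  simp

theorem integral_two_mul_re_comp_mul_exp_neg_mul_I
    (hg : ∀ u ∈ ball (0 : ℂ) 1, HasSum (fun n => c n * u ^ n) (g u)) (hr0 : 0 ≤ r) (hr1 : r < 1)
    {m : ℕ} (hm : m ≠ 0) :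
    ∫ t in (0 : ℝ)..2 * π, (2 * (g (r * exp (t * I))).re : ℂ) * exp (-m * t * I)
      = 2 * π * c m * r ^ m := by
  have hG := continuous_comp_ofReal_mul_exp_mul_I hg hr0 hr1
  have hsplit (t : ℝ) : (2 * (g (r * exp (t * I))).re : ℂ) * exp (-m * t * I)
      = g (r * exp (t * I)) * exp (-m * t * I) + conj (g (r * exp (t * I)) * exp (m * t * I)) := by
    rw [map_mul, ← exp_conj]
    simp only [map_mul, map_natCast, conj_ofReal, conj_I]
    rw [show (m : ℂ) * t * -I = -m * t * I by ring, ← add_mul, add_conj]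
    push_cast
    ring
  simp_rw [hsplit]
  rw [intervalIntegral.integral_add, intervalIntegral.intervalIntegral_conj,
    integral_comp_mul_exp_mul_I_eq_zero hg hr0 hr1 hm, map_zero, add_zero,
    integral_comp_mul_exp_neg_mul_I hg hr0 hr1]
  · exact (hG.mul (by fun_prop)).intervalIntegrable _ _
  · exact (continuous_conj.comp (hG.mul (by fun_prop))).intervalIntegrable _ _

theorem norm_coeff_mul_pow_le_two_mul_re
    (hg : ∀ u ∈ ball (0 : ℂ) 1, HasSum (fun n => c n * u ^ n) (g u))
    (hre : ∀ u ∈ ball (0 : ℂ) 1, 0 ≤ (g u).re) (hr0 : 0 ≤ r) (hr1 : r < 1) {m : ℕ} (hm : m ≠ 0) :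
    ‖c m‖ * r ^ m ≤ 2 * (c 0).re := by
  have hbound : 2 * π * (‖c m‖ * r ^ m) ≤ 2 * π * (2 * (c 0).re) := calc
    2 * π * (‖c m‖ * r ^ m)
      = ‖∫ t in (0 : ℝ)..2 * π, (2 * (g (r * exp (t * I))).re : ℂ) * exp (-m * t * I)‖ := by
        rw [integral_two_mul_re_comp_mul_exp_neg_mul_I hg hr0 hr1 hm]
        simp only [norm_mul, Complex.norm_ofNat, norm_real, norm_pow,
          Real.norm_of_nonneg hr0, Real.norm_of_nonneg Real.pi_nonneg]
        ring
    _ ≤ ∫ t in (0 : ℝ)..2 * π, ‖(2 * (g (r * exp (t * I))).re : ℂ) * exp (-m * t * I)‖ :=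
        intervalIntegral.norm_integral_le_integral_norm (by positivity)
    _ = ∫ t in (0 : ℝ)..2 * π, 2 * (g (r * exp (t * I))).re := by
        refine intervalIntegral.integral_congr fun t _ => ?_
        have hexp : ‖exp (-m * t * I)‖ = 1 := by exact_mod_cast norm_exp_ofReal_mul_I (-m * t)
        have hre_t : 0 ≤ 2 * (g (r * exp (t * I))).re := by
          linarith [hre _ (ofReal_mul_exp_mul_I_mem_ball hr0 hr1 t)]
        rw [norm_mul, hexp, mul_one]
        exact_mod_cast Real.norm_of_nonneg hre_t
    _ = 2 * π * (2 * (c 0).re) := by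
        rw [intervalIntegral.integral_const_mul, integral_re_comp_ofReal_mul_exp_mul_I hg hr0 hr1]
        ring
  exact le_of_mul_le_mul_left hbound (by positivity)

end PowerSeriesOnCircle

theorem norm_coeff_le_two_mul_re_of_re_nonneg {h : ℂ → ℂ} {a : ℕ → ℂ}
    (hh : ∀ u ∈ ball (0 : ℂ) 1, HasSum (fun n => a n * u ^ n) (h u))
    (hre : ∀ u ∈ ball (0 : ℂ) 1, 0 ≤ (h u).re) {m : ℕ} (hm : m ≠ 0) :
    ‖a m‖ ≤ 2 * (a 0).re := by
  have hlim : Filter.Tendsto (fun r : ℝ => ‖a m‖ * r ^ m) (𝓝[<] 1) (𝓝 ‖a m‖) :=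
    (Continuous.tendsto' (by fun_prop) 1 _ (by simp)).mono_left nhdsWithin_le_nhds
  refine le_of_tendsto hlim ?_
  filter_upwards [Ioo_mem_nhdsLT zero_lt_one] with r hr
  exact norm_coeff_mul_pow_le_two_mul_re hh hre hr.1.le hr.2 hm

theorem stmt_9_general (g : ℂ → ℂ) (c : ℕ → ℂ) (M θ : ℝ)
    (hg : ∀ u ∈ Metric.ball (0 : ℂ) 1, HasSum (fun m : ℕ => c m * u ^ m) (g u))
    (hθ : Complex.exp (θ * Complex.I) * c 0 = (‖c 0‖ : ℂ))
    (hre : ∀ u ∈ Metric.ball (0 : ℂ) 1,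
      0 ≤ ((M : ℂ) - Complex.exp (θ * Complex.I) * g u).re) :
    ∀ m : ℕ, 1 ≤ m → ‖c m‖ ≤ 2 * (M - ‖c 0‖) := by
  intro m hm
  have hm0 : m ≠ 0 := Nat.one_le_iff_ne_zero.mp hm
  set e := exp (θ * I)
  have hh (u : ℂ) (hu : u ∈ ball (0 : ℂ) 1) :
      HasSum (fun n => ((if n = 0 then (M : ℂ) else 0) - e * c n) * u ^ n) (M - e * g u) := by
    have hconst : HasSum (fun n => (if n = 0 then (M : ℂ) else 0) * u ^ n) M := by
      have := hasSum_single (f := fun n => (if n = 0 then (M : ℂ) else 0) * u ^ n) 0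
        fun n hn => by simp [hn]
      rwa [if_pos rfl, pow_zero, mul_one] at this
    simpa only [sub_mul, mul_assoc] using hconst.sub ((hg u hu).mul_left e)
  simpa [hθ, e, norm_exp_ofReal_mul_I, hm0] using
    norm_coeff_le_two_mul_re_of_re_nonneg hh hre hm0

/-- Carathéodory's inequality: if `g(u) = ∑ c_m u^m` on the disc, `M = sup_𝔻 |g|`,
`θ` is such that `e^{iθ} c₀ = |c₀|`, and `Re (M - e^{iθ} g(u)) ≥ 0` on `𝔻`, then
`|c_m| ≤ 2 (M - |c₀|)` for all `m ≥ 1`. -/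
theorem stmt_9 (g : ℂ → ℂ) (c : ℕ → ℂ) (M θ : ℝ)
    (hg : ∀ u ∈ Metric.ball (0 : ℂ) 1, HasSum (fun m : ℕ => c m * u ^ m) (g u))
    (hM : M = ⨆ u ∈ Metric.ball (0 : ℂ) 1, ‖g u‖)
    (hθ : Complex.exp (θ * Complex.I) * c 0 = (‖c 0‖ : ℂ))
    (hre : ∀ u ∈ Metric.ball (0 : ℂ) 1,
      0 ≤ ((M : ℂ) - Complex.exp (θ * Complex.I) * g u).re) :
    ∀ m : ℕ, 1 ≤ m → ‖c m‖ ≤ 2 * (M - ‖c 0‖) :=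
  stmt_9_general g c M θ hg hθ hre
end
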